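/- arXiv:0904.1923 — 2 statements merged into one kernel-verified Lean document; each statement's English description precedes it below -/
import Mathlib

section
/- Let G = (V,E) be a finite simple graph, v a vertex of G, and M a module of G*v with v ∈ M. Then (V ∖ M) ∪ {v} is a module of G. -/
universe u

/-- The Seidel complement of `G` at `v`: adjacency between the open neighborhood of `v`
and the set of vertices different from `v` and not adjacent to `v` is complemented,
all other adjacencies are unchanged. -/
def seidelCompl {V : Type u} (G : SimpleGraph V) (v : V) : SimpleGraph V where
  Adj x y := x ≠ y ∧
    Xor' (G.Adj x y)
      ((G.Adj v x ∧ ¬ G.Adj v y ∧ y ≠ v) ∨ (G.Adj v y ∧ ¬ G.Adj v x ∧ x ≠ v))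
  symm := ⟨by
    rintro x y ⟨hxy, h⟩
    refine ⟨hxy.symm, ?_⟩
    have h1 : G.Adj x y ↔ G.Adj y x := G.adj_comm x y
    unfold Xor' at h ⊢
    unfold Xor at h ⊢
    tauto⟩
  loopless := ⟨fun x h => h.1 rfl⟩

/-- `M` is a module of `G`: every vertex outside `M` is adjacent either to all
vertices of `M` or to none of them. -/
def IsModule {V : Type u} (G : SimpleGraph V) (M : Set V) : Prop :=
  ∀ z ∉ M, (∀ m ∈ M, G.Adj z m) ∨ (∀ m ∈ M, ¬ G.Adj z m)

/-- `G` is prime w.r.t. modular decomposition: every module is trivial. -/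
def IsPrime {V : Type u} (G : SimpleGraph V) : Prop :=
  ∀ M : Set V, IsModule G M → M = ∅ ∨ (∃ x, M = {x}) ∨ M = Set.univ

section

variable {V : Type u} {G : SimpleGraph V} {v x y z m : V} {M : Set V}

theorem isModule_iff_adj_iff :
    IsModule G M ↔ ∀ z ∉ M, ∀ x ∈ M, ∀ y ∈ M, (G.Adj z x ↔ G.Adj z y) := by
  refine ⟨fun hM z hz x hx y hy => ?_, fun h z hz => ?_⟩
  · rcases hM z hz with hall | hnone
    · exact iff_of_true (hall x hx) (hall y hy)
    · exact iff_of_false (hnone x hx) (hnone y hy)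
  · by_cases hM : ∃ x ∈ M, G.Adj z x
    · obtain ⟨x, hx, hzx⟩ := hM
      exact .inl fun y hy => (h z hz x hx y hy).1 hzx
    · exact .inr fun y hy hzy => hM ⟨y, hy, hzy⟩

theorem IsModule.adj_iff (hM : IsModule G M) (hm : m ∉ M) (hx : x ∈ M) (hy : y ∈ M) :
    G.Adj m x ↔ G.Adj m y :=
  isModule_iff_adj_iff.1 hM m hm x hx y hy

theorem seidelCompl_adj_right_self : (seidelCompl G v).Adj x v ↔ G.Adj x v := by
  have hvv : ¬G.Adj v v := G.loopless.irrefl v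
  refine ⟨fun ⟨_, h⟩ => ?_, fun h => ⟨G.ne_of_adj h, ?_⟩⟩ <;> unfold Xor' Xor at * <;> tauto

theorem seidelCompl_adj_of_ne (hx : x ≠ v) (hy : y ≠ v) :
    (seidelCompl G v).Adj x y ↔ Xor (G.Adj x y) (Xor (G.Adj v x) (G.Adj v y)) := by
  by_cases hxy : x = y
  · subst hxy
    simp
  · simp only [seidelCompl, ne_eq, hxy, hx, hy, not_false_eq_true, true_and]
    unfold Xor' Xor
    tauto

theorem IsModule.adj_iff_adj_of_seidelCompl (hM : IsModule (seidelCompl G v) M) (hv : v ∈ M)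
    (hz : z ∈ M) (hzv : z ≠ v) (hm : m ∉ M) : G.Adj z m ↔ G.Adj z v := by
  have hmv : m ≠ v := fun h => hm (h ▸ hv)
  -- `m` sees `z` and `v` alike in `G*v`; undoing the complementation at `z` gives the claim.
  have h := hM.adj_iff hm hz hv
  rw [seidelCompl_adj_of_ne hmv hzv, seidelCompl_adj_right_self] at h
  rw [G.adj_comm z m, G.adj_comm z v, G.adj_comm m v] at *
  grind

end

theorem isModule_compl_union_of_seidelCompl_general {V : Type u} (G : SimpleGraph V)
    (v : V) (M : Set V) (hM : IsModule (seidelCompl G v) M) (hv : v ∈ M) :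
    IsModule G (Mᶜ ∪ {v}) := by
  refine isModule_iff_adj_iff.2 fun z hz x hx y hy => ?_
  simp only [Set.mem_union, Set.mem_compl_iff, Set.mem_singleton_iff, not_or, not_not] at hz
  have hadj : ∀ m ∈ Mᶜ ∪ {v}, G.Adj z m ↔ G.Adj z v := by
    rintro m (hm | rfl)
    · exact hM.adj_iff_adj_of_seidelCompl hv hz.1 hz.2 hm
    · rfl
  exact (hadj x hx).trans (hadj y hy).symm

/-- If `M` is a module of `G*v` containing `v`, then `(V ∖ M) ∪ {v}` is a module of `G`. -/
theorem isModule_compl_union_of_seidelCompl {V : Type u} [Fintype V] (G : SimpleGraph V)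
    (v : V) (M : Set V) (hM : IsModule (seidelCompl G v) M) (hv : v ∈ M) :
    IsModule G (Mᶜ ∪ {v}) :=
  isModule_compl_union_of_seidelCompl_general G v M hM hv
end

section
/- Let G = (V,E) be a finite simple graph and v a vertex of G. Then G is a cograph if and only if G*v is a cograph. -/
universe u

/-- A cograph: a graph with no induced subgraph isomorphic to `P₄`,
the path on four vertices. -/
def IsCograph {V : Type u} (G : SimpleGraph V) : Prop :=
  IsEmpty (SimpleGraph.pathGraph 4 ↪g G)

/-!
An induced `P₄` of `G*v` spans, together with `v`, at most five vertices, and Seidel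
complementation at `v` commutes with restriction to any vertex set containing `v`. Since
complementing twice at `v` is the identity, `G` restricted to those vertices is the Seidel
complement either of `P₄` at one of its own vertices or of `P₄` plus an apex `v` with some
neighbourhood `s ⊆ P₄`. These are twenty explicit graphs, each of which contains an induced
`P₄`. Involutivity then gives the converse.
-/

open SimpleGraph Function

variable {V W : Type*}

lemma seidelCompl_adj {G : SimpleGraph V} {v x y : V} :
    (seidelCompl G v).Adj x y ↔ x ≠ y ∧ Xor (G.Adj x y)
      ((G.Adj v x ∧ ¬ G.Adj v y ∧ y ≠ v) ∨ (G.Adj v y ∧ ¬ G.Adj v x ∧ x ≠ v)) :=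
  Iff.rfl

lemma seidelCompl_adj_self (G : SimpleGraph V) (v x : V) :
    (seidelCompl G v).Adj v x ↔ G.Adj v x := by
  simp only [seidelCompl_adj, G.irrefl, ne_eq, not_true, false_and, and_false, or_false, Xor,
    not_false_eq_true, and_true]
  exact ⟨And.right, fun h => ⟨h.ne, h⟩⟩

lemma seidelCompl_seidelCompl (G : SimpleGraph V) (v : V) :
    seidelCompl (seidelCompl G v) v = G := by
  ext x y
  rw [seidelCompl_adj, seidelCompl_adj_self, seidelCompl_adj_self, seidelCompl_adj]
  have hne : G.Adj x y → x ≠ y := G.ne_of_adj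
  by_cases G.Adj v x <;> by_cases G.Adj v y <;> by_cases x = v <;> by_cases y = v <;>
    simp_all [Xor] <;> tauto

lemma comap_seidelCompl (G : SimpleGraph V) {g : W → V} (hg : Injective g) (k : W) :
    (seidelCompl G (g k)).comap g = seidelCompl (G.comap g) k := by
  ext x y
  simp only [seidelCompl_adj, comap_adj, hg.ne_iff]

lemma comap_eq_seidelCompl {G : SimpleGraph V} {H : SimpleGraph W} {g : W → V}
    (hg : Injective g) {k : W} (h : (seidelCompl G (g k)).comap g = H) :
    G.comap g = seidelCompl H k := by
  rw [← h, comap_seidelCompl G hg, seidelCompl_seidelCompl]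

instance [DecidableEq V] (G : SimpleGraph V) [DecidableRel G.Adj] (v : V) :
    DecidableRel (seidelCompl G v).Adj :=
  fun _ _ => decidable_of_iff _ seidelCompl_adj.symm

lemma not_isCograph_of_exists_induced_path {G : SimpleGraph V}
    (h : ∃ a b c d, G.Adj a b ∧ G.Adj b c ∧ G.Adj c d ∧ ¬ G.Adj a c ∧ ¬ G.Adj a d ∧ ¬ G.Adj b d) :
    ¬ IsCograph G := by
  obtain ⟨a, b, c, d, hab, hbc, hcd, hac, had, hbd⟩ := h
  have hac' : a ≠ c := by rintro rfl; exact had hcd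
  have hbd' : b ≠ d := by rintro rfl; exact had hab
  have had' : a ≠ d := by rintro rfl; exact hac hcd.symm
  refine fun hG => hG.false ⟨⟨![a, b, c, d], fun i j hij => ?_⟩, @fun i j => ?_⟩
  · fin_cases i <;> fin_cases j <;>
      simp_all [hab.ne, hbc.ne, hcd.ne, hab.ne.symm, hbc.ne.symm, hcd.ne.symm]
  · change G.Adj (![a, b, c, d] i) (![a, b, c, d] j) ↔ _
    rw [pathGraph_adj]
    fin_cases i <;> fin_cases j <;> simp_all [G.adj_comm]

lemma IsCograph.comap {G : SimpleGraph V} (hG : IsCograph G) {g : W → V} (hg : Injective g) :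
    IsCograph (G.comap g) :=
  ⟨fun f => hG.false (f.trans (Embedding.comap ⟨g, hg⟩ G))⟩

instance (n : ℕ) : DecidableRel (pathGraph n).Adj :=
  fun _ _ => decidable_of_iff _ pathGraph_adj.symm

/-- `P₄` on `some 0, …, some 3`, plus the vertex `none` adjacent to exactly `s`. -/
def pathGraphCone (s : Finset (Fin 4)) : SimpleGraph (Option (Fin 4)) where
  Adj
    | some i, some j => (pathGraph 4).Adj i j
    | none, some j => j ∈ s
    | some i, none => i ∈ s
    | none, none => False
  symm := ⟨by rintro (_ | i) (_ | j) <;> simp [adj_comm]⟩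
  loopless := ⟨by rintro (_ | i) <;> simp⟩

instance (s : Finset (Fin 4)) : DecidableRel (pathGraphCone s).Adj
  | some i, some j => inferInstanceAs (Decidable ((pathGraph 4).Adj i j))
  | none, some j => inferInstanceAs (Decidable (j ∈ s))
  | some i, none => inferInstanceAs (Decidable (i ∈ s))
  | none, none => inferInstanceAs (Decidable False)

lemma not_isCograph_seidelCompl_pathGraph (k : Fin 4) :
    ¬ IsCograph (seidelCompl (pathGraph 4) k) :=
  not_isCograph_of_exists_induced_path (by revert k; decide)

lemma not_isCograph_seidelCompl_pathGraphCone (s : Finset (Fin 4)) :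
    ¬ IsCograph (seidelCompl (pathGraphCone s) none) :=
  not_isCograph_of_exists_induced_path (by revert s; decide)

lemma isCograph_seidelCompl {G : SimpleGraph V} (hG : IsCograph G) (v : V) :
    IsCograph (seidelCompl G v) := by
  refine ⟨fun f => ?_⟩
  by_cases hv : v ∈ Set.range f
  · obtain ⟨k, hk⟩ := hv
    have hpath : (seidelCompl G (f k)).comap f = pathGraph 4 := by rw [hk]; exact f.comap_eq
    have hG' := hG.comap f.injective
    rw [comap_eq_seidelCompl f.injective hpath] at hG'
    exact not_isCograph_seidelCompl_pathGraph k hG'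
  · classical
    have hg : Injective (Option.elim' v f) := Option.injective_iff.2 ⟨f.injective, hv⟩
    have hcone : (seidelCompl G v).comap (Option.elim' v f) =
        pathGraphCone {i | G.Adj v (f i)} := by
      ext (_ | i) (_ | j)
      · simp [pathGraphCone]
      · simp [pathGraphCone, seidelCompl_adj_self]
      · simp [pathGraphCone, seidelCompl_adj_self, (seidelCompl G v).adj_comm]
      · exact f.map_adj_iff
    have hG' := hG.comap hg
    rw [comap_eq_seidelCompl (k := none) hg hcone] at hG'
    exact not_isCograph_seidelCompl_pathGraphCone _ hG'

theorem isCograph_seidelCompl_iff_general {V : Type u} (G : SimpleGraph V) (v : V) :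
    IsCograph G ↔ IsCograph (seidelCompl G v) :=
  ⟨fun h => isCograph_seidelCompl h v,
    fun h => seidelCompl_seidelCompl G v ▸ isCograph_seidelCompl h v⟩

/-- `G` is a cograph iff `G*v` is a cograph. -/
theorem isCograph_seidelCompl_iff {V : Type u} [Fintype V] (G : SimpleGraph V) (v : V) :
    IsCograph G ↔ IsCograph (seidelCompl G v) :=
  isCograph_seidelCompl_iff_general G v
end
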